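/- Let (A,≺,≻) be a J-dendriform algebra and α: A → A an algebra morphism (preserving both ≺ and ≻). Then (A, ≺_α, ≻_α, α) with x≺_α y = α(x)≺α(y) and x≻_α y = α(x)≻α(y) is a Hom-J-dendriform algebra. -/

import Mathlib

universe u

section Defs

variable {K : Type*} {A : Type u} {V : Type*} [Field K] [CharZero K]
  [AddCommGroup A] [Module K A] [AddCommGroup V] [Module K V]

/-- Anti-commutator of a bilinear product. -/
def ac (m : A →ₗ[K] A →ₗ[K] A) (x y : A) : A := m x y + m y x

/-- Hom-associator. -/
def homAssociator (m : A →ₗ[K] A →ₗ[K] A) (α : A →ₗ[K] A) (x y z : A) : A :=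
  m (m x y) (α z) - m (α x) (m y z)

/-- Hom-Jordan algebra: commutative product satisfying the linearized Hom-Jordan identity. -/
def IsHomJordan (m : A →ₗ[K] A →ₗ[K] A) (α : A →ₗ[K] A) : Prop :=
  (∀ x y, m x y = m y x) ∧
  ∀ x y z u,
    homAssociator m α (m x y) (α u) (α z) + homAssociator m α (m y z) (α u) (α x)
      + homAssociator m α (m z x) (α u) (α y) = 0

/-- Representation of a Hom-Jordan algebra. -/
def IsHomJordanRep (m : A →ₗ[K] A →ₗ[K] A) (α : A →ₗ[K] A)
    (ρ : A →ₗ[K] Module.End K V) (φ : Module.End K V) : Prop :=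
  (∀ x, φ * ρ x = ρ (α x) * φ) ∧
  (∀ x y z,
    ρ (α (α x)) * ρ (m y z) * φ + ρ (α (α y)) * ρ (m z x) * φ + ρ (α (α z)) * ρ (m x y) * φ
    = ρ (m (α x) (α y)) * ρ (α z) * φ + ρ (m (α y) (α z)) * ρ (α x) * φ
      + ρ (m (α z) (α x)) * ρ (α y) * φ) ∧
  (∀ x y z,
    ρ (m (m x y) (α z)) * φ * φ + ρ (α (α x)) * ρ (α z) * ρ y + ρ (α (α z)) * ρ (α y) * ρ x
    = ρ (m (α x) (α y)) * ρ (α z) * φ + ρ (m (α y) (α z)) * ρ (α x) * φ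
      + ρ (m (α z) (α x)) * ρ (α y) * φ)

/-- Hom-pre-Jordan algebra. -/
def IsHomPreJordan (m : A →ₗ[K] A →ₗ[K] A) (α : A →ₗ[K] A) : Prop :=
  (∀ x y z u,
    m (ac m (α x) (α y)) (m (α z) (α u)) + m (ac m (α y) (α z)) (m (α x) (α u))
      + m (ac m (α z) (α x)) (m (α y) (α u))
    = m (α (α x)) (m (ac m y z) (α u)) + m (α (α y)) (m (ac m z x) (α u))
      + m (α (α z)) (m (ac m x y) (α u))) ∧
  (∀ x y z u,
    m (ac m (ac m x z) (α y)) (α (α u)) + m (α (α x)) (m (α y) (m z u))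
      + m (α (α z)) (m (α y) (m x u))
    = m (α (α x)) (m (ac m y z) (α u)) + m (α (α y)) (m (ac m z x) (α u))
      + m (α (α z)) (m (ac m x y) (α u)))

/-- Bimodule of a Hom-pre-Jordan algebra. -/
def IsHomPreJordanBimodule (m : A →ₗ[K] A →ₗ[K] A) (α : A →ₗ[K] A)
    (l r : A →ₗ[K] Module.End K V) (φ : Module.End K V) : Prop :=
  (∀ x, φ * l x = l (α x) * φ) ∧
  (∀ x, φ * r x = r (α x) * φ) ∧
  (∀ x y z,
    l (ac m (α x) (α y)) * l (α z) * φ + l (ac m (α y) (α z)) * l (α x) * φ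
      + l (ac m (α z) (α x)) * l (α y) * φ
    = l (α (α x)) * l (ac m y z) * φ + l (α (α y)) * l (ac m z x) * φ
      + l (α (α z)) * l (ac m x y) * φ) ∧
  (∀ x y z,
    l (ac m (ac m x z) (α y)) * φ * φ + l (α (α x)) * l (α y) * l z
      + l (α (α z)) * l (α y) * l x
    = l (α (α x)) * l (ac m y z) * φ + l (α (α y)) * l (ac m z x) * φ
      + l (α (α z)) * l (ac m x y) * φ) ∧
  (∀ x y u,
    l (ac m (α x) (α y)) * r (α u) * φ + r (m (α x) (α u)) * (l (α y) + r (α y)) * φ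
      + r (m (α y) (α u)) * (l (α x) + r (α x)) * φ
    = l (α (α x)) * r (α u) * (l y + r y) + l (α (α y)) * r (α u) * (l x + r x)
      + r (m (ac m x y) (α u)) * φ * φ) ∧
  (∀ x z u,
    r (α (α u)) * (l (ac m x z) + r (ac m x z)) * φ + l (α (α x)) * r (m z u) * φ
      + l (α (α z)) * r (m x u) * φ
    = l (α (α x)) * r (α u) * (l z + r z) + r (m (ac m z x) (α u)) * φ * φ
      + l (α (α z)) * r (α u) * (l x + r x)) ∧
  (∀ y z u,
    r (α (α u)) * (l (α y) + r (α y)) * (l z + r z) + r (m (α y) (m z u)) * φ * φ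
      + l (α (α z)) * l (α y) * r u
    = r (m (ac m y z) (α u)) * φ * φ + l (α (α y)) * r (α u) * (l z + r z)
      + l (α (α z)) * r (α u) * (l y + r y))

/-- vertical product of a pair of products: x·y = x≻y + y≺x. -/
def jdot (p s : A →ₗ[K] A →ₗ[K] A) (x y : A) : A := s x y + p y x

/-- horizontal product: x⋄y = x≻y + x≺y. -/
def jdia (p s : A →ₗ[K] A →ₗ[K] A) (x y : A) : A := s x y + p x y

/-- x∘y = x·y + y·x. -/
def jcirc (p s : A →ₗ[K] A →ₗ[K] A) (x y : A) : A := jdot p s x y + jdot p s y x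

/-- Hom-J-dendriform algebra. -/
def IsHomJDendriform (p s : A →ₗ[K] A →ₗ[K] A) (α : A →ₗ[K] A) : Prop :=
  (∀ x y z u,
    s (α (jcirc p s x y)) (α (s z u)) + s (α (jcirc p s y z)) (α (s x u))
      + s (α (jcirc p s z x)) (α (s y u))
    = s (α (α x)) (s (jcirc p s y z) (α u)) + s (α (α y)) (s (jcirc p s z x) (α u))
      + s (α (α z)) (s (jcirc p s x y) (α u))) ∧
  (∀ x y z u,
    s (α (jcirc p s x y)) (α (s z u)) + s (α (jcirc p s y z)) (α (s x u))
      + s (α (jcirc p s z x)) (α (s y u))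
    = s (α (α x)) (s (α y) (s z u)) + s (α (α z)) (s (α y) (s x u))
      + s (jcirc p s (α y) (jcirc p s z x)) (α (α u))) ∧
  (∀ x y z u,
    s (α (jcirc p s x y)) (α (p z u)) + p (α (jdot p s x z)) (α (jdia p s y u))
      + p (α (jdot p s y z)) (α (jdia p s x u))
    = s (α (α x)) (p (α z) (jdia p s y u)) + s (α (α y)) (p (α z) (jdia p s x u))
      + p (jdot p s (jcirc p s x y) (α z)) (α (α u))) ∧
  (∀ x y z u,
    p (α (jdot p s z y)) (α (jdia p s x u)) + p (α (jdot p s x y)) (α (jdia p s z u))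
      + s (α (jcirc p s x z)) (α (p y u))
    = s (α (α x)) (p (jdot p s z y) (α u)) + s (α (α z)) (p (jdot p s x y) (α u))
      + p (α (α y)) (jdia p s (jcirc p s x z) (α u))) ∧
  (∀ x y z u,
    s (α (jcirc p s x y)) (α (p z u)) + s (α (jdot p s x z)) (α (jdia p s y u))
      + p (α (jdot p s y z)) (α (jdia p s x u))
    = s (α (α x)) (s (α y) (p z u)) + p (α (α z)) (jdia p s (α y) (jdia p s z u))
      + p (jdot p s (α y) (jdot p s x z)) (α (α u)))

/-- Hom-pre-alternative algebra. -/
def IsHomPreAlternative (p s : A →ₗ[K] A →ₗ[K] A) (α : A →ₗ[K] A) : Prop :=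
  (∀ x y z, p (s x y) (α z) - s (α x) (p y z) + p (p y x) (α z) - p (α y) (p x z + s x z) = 0) ∧
  (∀ x y z, p (s x y) (α z) - s (α x) (p y z) + s (p x z + s x z) (α y) - s (α x) (s z y) = 0) ∧
  (∀ x y z, p (p x y) (α z) - p (α x) (p y z + s y z) + p (p x z) (α y) - p (α x) (p z y + s z y) = 0) ∧
  (∀ x y z, s (p x y + s x y) (α z) - s (α x) (s y z) + s (p y x + s y x) (α z) - s (α y) (s x z) = 0)

/-- Hom-dendriform algebra. -/
def IsHomDendriform (p s : A →ₗ[K] A →ₗ[K] A) (α : A →ₗ[K] A) : Prop :=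
  (∀ x y z, p (s x y) (α z) = s (α x) (p y z)) ∧
  (∀ x y z, p (p x y) (α z) = p (α x) (p y z + s y z)) ∧
  (∀ x y z, s (p x y + s x y) (α z) = s (α x) (s y z))

/-- Semidirect product multiplication for a Hom-Jordan representation. -/
def sdJMul (m : A →ₗ[K] A →ₗ[K] A) (ρ : A →ₗ[K] Module.End K V) :
    (A × V) →ₗ[K] (A × V) →ₗ[K] (A × V) :=
  LinearMap.mk₂ K (fun x y => (m x.1 y.1, ρ x.1 y.2 + ρ y.1 x.2))
    (fun x x' y => by simp [Prod.ext_iff]; abel)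
    (fun c x y => by simp [Prod.ext_iff, smul_add])
    (fun x y y' => by simp [Prod.ext_iff]; abel)
    (fun c x y => by simp [Prod.ext_iff, smul_add])

/-- Semidirect product multiplication for a Hom-pre-Jordan bimodule. -/
def sdPMul (m : A →ₗ[K] A →ₗ[K] A) (l r : A →ₗ[K] Module.End K V) :
    (A × V) →ₗ[K] (A × V) →ₗ[K] (A × V) :=
  LinearMap.mk₂ K (fun x y => (m x.1 y.1, l x.1 y.2 + r y.1 x.2))
    (fun x x' y => by simp [Prod.ext_iff]; abel)
    (fun c x y => by simp [Prod.ext_iff, smul_add])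
    (fun x y y' => by simp [Prod.ext_iff]; abel)
    (fun c x y => by simp [Prod.ext_iff, smul_add])

end Defs

section YauTwist

variable {K : Type*} {A : Type*} [Field K] [AddCommGroup A] [Module K A]
  {p s : A →ₗ[K] A →ₗ[K] A} {α : A →ₗ[K] A}

theorem jdot_compl₁₂ (x y : A) :
    jdot (p.compl₁₂ α α) (s.compl₁₂ α α) x y = jdot p s (α x) (α y) := rfl

theorem jdia_compl₁₂ (x y : A) :
    jdia (p.compl₁₂ α α) (s.compl₁₂ α α) x y = jdia p s (α x) (α y) := rfl

theorem jcirc_compl₁₂ (x y : A) :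
    jcirc (p.compl₁₂ α α) (s.compl₁₂ α α) x y = jcirc p s (α x) (α y) := rfl

variable (hp : ∀ x y, α (p x y) = p (α x) (α y)) (hs : ∀ x y, α (s x y) = s (α x) (α y))
include hp hs

theorem map_jdot (x y : A) : α (jdot p s x y) = jdot p s (α x) (α y) := by
  simp only [jdot, map_add, hp, hs]

theorem map_jdia (x y : A) : α (jdia p s x y) = jdia p s (α x) (α y) := by
  simp only [jdia, map_add, hp, hs]

theorem map_jcirc (x y : A) : α (jcirc p s x y) = jcirc p s (α x) (α y) := by
  simp only [jcirc, map_add, map_jdot hp hs]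

/-- Since `α` is a morphism commuting with `β`, every twisted product is the image under `α` of
the untwisted one, so each twisted identity is the image under `α ^ 3` of the untwisted one. -/
theorem IsHomJDendriform.compl₁₂ {β : A →ₗ[K] A} (h : IsHomJDendriform p s β)
    (hαβ : Commute α β) :
    IsHomJDendriform (p.compl₁₂ α α) (s.compl₁₂ α α) (α ∘ₗ β) := by
  have hβα : ∀ x, β (α x) = α (β x) := fun x => (LinearMap.congr_fun hαβ x).symm
  obtain ⟨h1, h2, h3, h4, h5⟩ := h
  refine ⟨fun x y z u => ?_, fun x y z u => ?_, fun x y z u => ?_, fun x y z u => ?_,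
    fun x y z u => ?_⟩ <;>
  simp only [LinearMap.compl₁₂_apply, LinearMap.comp_apply, jdot_compl₁₂, jdia_compl₁₂,
    jcirc_compl₁₂, hβα, ← hp, ← hs, ← map_jdot hp hs, ← map_jdia hp hs, ← map_jcirc hp hs,
    ← map_add]
  · rw [h1]
  · rw [h2]
  · rw [h3]
  · rw [h4]
  · rw [h5]

end YauTwist

theorem jDendriform_yau_twist_general
    {K : Type*} {A : Type*} [Field K] [AddCommGroup A] [Module K A]
    (p s : A →ₗ[K] A →ₗ[K] A) (h : IsHomJDendriform p s (LinearMap.id : A →ₗ[K] A))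
    (α : A →ₗ[K] A)
    (hp : ∀ x y, α (p x y) = p (α x) (α y)) (hs : ∀ x y, α (s x y) = s (α x) (α y)) :
    IsHomJDendriform (p.compl₁₂ α α) (s.compl₁₂ α α) α :=
  h.compl₁₂ hp hs (Commute.one_right α)

/-- twisting a J-dendriform algebra along an algebra morphism yields a
Hom-J-dendriform algebra. -/
theorem jDendriform_yau_twist
    {K : Type*} {A : Type*} [Field K] [CharZero K] [AddCommGroup A] [Module K A]
    (p s : A →ₗ[K] A →ₗ[K] A) (h : IsHomJDendriform p s (LinearMap.id : A →ₗ[K] A))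
    (α : A →ₗ[K] A)
    (hp : ∀ x y, α (p x y) = p (α x) (α y)) (hs : ∀ x y, α (s x y) = s (α x) (α y)) :
    IsHomJDendriform (p.compl₁₂ α α) (s.compl₁₂ α α) α :=
  jDendriform_yau_twist_general p s h α hp hs
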